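/- For every positive integer n, every 0 ≤ h ≤ 2n, every Y ∈ 𝓡_{2n} and every B ∈ 𝓡_{2n}^h, one has 𝒢(Y, B) = 𝒢(Y^{∧_h}, B^{∨_h}). -/

import Mathlib

open MeasureTheory Filter Matrix

noncomputable section

instance matrixMeasurableSpace {a b : ℕ} {α : Type*} [MeasurableSpace α] :
    MeasurableSpace (Matrix (Fin a) (Fin b) α) :=
  inferInstanceAs (MeasurableSpace (Fin a → Fin b → α))

/-- The ambient arithmetic setting of the paper: `E` is (the underlying field of) the
unramified quadratic extension `E_v` of an unramified finite extension `F_v` of `ℚ_p`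
(`p` an odd prime); `σ` is the nontrivial Galois automorphism of `E_v/F_v` (so `F_v` is
its fixed field), `ϖ` a uniformizer lying in `F_v` (i.e. fixed by `σ`; it stays a
uniformizer in `E_v` since the extension is unramified), `v` the normalized discrete
valuation of `E_v` (so `v ϖ = 1` and also `v p = 1`, expressing that `F_v/ℚ_p` is
unramified), `q` the residue cardinality of `F_v` (a power of `p`; the residue field of
`E_v` then has `q ^ 2` elements, which is encoded in the scaling behaviour of the Haar
measure `μ`), `μ` the additive Haar measure of `E_v` normalized by `μ O_{E_v} = 1`,
`ψ` the standard additive character of `F_v` (trivial on `O_{F_v}`, nontrivial on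
`ϖ⁻¹ O_{F_v}`), and `μV k` the Haar measure on the space `V_k(E_v)` of `k × k`
hermitian matrices, normalized by `μV (V_k(O_{E_v})) = 1`. -/
class KRSetting (E : Type) extends Field E, MeasurableSpace E where
  p : ℕ
  q : ℕ
  pPrime : p.Prime
  pOdd : p ≠ 2
  q_pow : ∃ k : ℕ, 0 < k ∧ q = p ^ k
  charZ : CharZero E
  σ : E →+* E
  σ_invol : Function.Involutive σ
  σ_ne_id : σ ≠ RingHom.id E
  ϖ : E
  ϖ_ne : ϖ ≠ 0
  σ_ϖ : σ ϖ = ϖ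
  v : E → ℤ
  v_mul : ∀ x y : E, x ≠ 0 → y ≠ 0 → v (x * y) = v x + v y
  v_add : ∀ x y : E, x ≠ 0 → y ≠ 0 → x + y ≠ 0 → min (v x) (v y) ≤ v (x + y)
  v_ϖ : v ϖ = 1
  v_p : v (p : E) = 1
  v_surj : ∀ k : ℤ, ∃ x : E, x ≠ 0 ∧ v x = k
  v_σ : ∀ x : E, x ≠ 0 → v (σ x) = v x
  μ : MeasureTheory.Measure E
  μ_sfin : MeasureTheory.SigmaFinite μ
  μ_trans : ∀ a : E, μ.map (fun x => a + x) = μ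
  μ_O : μ {x : E | x = 0 ∨ 0 ≤ v x} = 1
  μ_scale : ∀ a : E, a ≠ 0 → μ.map (fun x => a * x) = ((q : ENNReal) ^ (2 * v a)) • μ
  ψ : E → ℂ
  ψ_add : ∀ x y : E, ψ (x + y) = ψ x * ψ y
  ψ_triv : ∀ x : E, (x = 0 ∨ 0 ≤ v x) → σ x = x → ψ x = 1
  ψ_nontriv : ∃ x : E, σ x = x ∧ (ϖ * x = 0 ∨ 0 ≤ v (ϖ * x)) ∧ ψ x ≠ 1
  μV : (k : ℕ) → MeasureTheory.Measure (Matrix (Fin k) (Fin k) E)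
  μV_sfin : ∀ k : ℕ, MeasureTheory.SigmaFinite (μV k)
  μV_supp : ∀ k : ℕ, μV k {Y : Matrix (Fin k) (Fin k) E | ¬ ∀ i j, σ (Y j i) = Y i j} = 0
  μV_trans : ∀ (k : ℕ) (A : Matrix (Fin k) (Fin k) E),
    (∀ i j, σ (A j i) = A i j) → (μV k).map (fun Y => A + Y) = μV k
  μV_O : ∀ k : ℕ, μV k {Y : Matrix (Fin k) (Fin k) E |
    (∀ i j, σ (Y j i) = Y i j) ∧ ∀ i j, Y i j = 0 ∨ 0 ≤ v (Y i j)} = 1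

namespace KR

variable {E : Type} [KRSetting E]

instance : CharZero E := KRSetting.charZ

instance : MeasureTheory.SigmaFinite (KRSetting.μ (E := E)) := KRSetting.μ_sfin

instance (k : ℕ) : MeasureTheory.SigmaFinite (KRSetting.μV (E := E) k) := KRSetting.μV_sfin k

/-- The residue cardinality `q` of `F_v`. -/
abbrev qq (E : Type) [KRSetting E] : ℕ := KRSetting.q (E := E)

/-- The fixed uniformizer `π` of `F_v` (and of `E_v`). -/
abbrev uf (E : Type) [KRSetting E] : E := KRSetting.ϖ

/-- The nontrivial Galois conjugation `x ↦ x*` of `E_v / F_v`. -/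
abbrev cj (x : E) : E := KRSetting.σ (E := E) x

/-- The additive character `ψ_v`. -/
abbrev ch (x : E) : ℂ := KRSetting.ψ x

/-- `x ∈ O_{E_v}`. -/
def inO (x : E) : Prop := x = 0 ∨ 0 ≤ KRSetting.v x

/-- The ring of integers `O_{E_v}` as a subring of `E_v`. -/
def Oring (E : Type) [KRSetting E] : Subring E where
  carrier := {x : E | inO x}
  zero_mem' := Or.inl rfl
  one_mem' := by
    have h := KRSetting.v_mul (1 : E) 1 one_ne_zero one_ne_zero
    rw [one_mul] at h
    exact Or.inr (by omega)
  add_mem' := by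
    intro a b ha hb
    have ha' : a = 0 ∨ 0 ≤ KRSetting.v a := ha
    have hb' : b = 0 ∨ 0 ≤ KRSetting.v b := hb
    show a + b = 0 ∨ 0 ≤ KRSetting.v (a + b)
    by_cases ha0 : a = 0
    · subst ha0; simpa using hb'
    by_cases hb0 : b = 0
    · subst hb0; simpa using ha'
    by_cases hab : a + b = 0
    · exact Or.inl hab
    have hva : 0 ≤ KRSetting.v a := ha'.resolve_left ha0
    have hvb : 0 ≤ KRSetting.v b := hb'.resolve_left hb0
    exact Or.inr (le_trans (le_min hva hvb) (KRSetting.v_add a b ha0 hb0 hab))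
  mul_mem' := by
    intro a b ha hb
    have ha' : a = 0 ∨ 0 ≤ KRSetting.v a := ha
    have hb' : b = 0 ∨ 0 ≤ KRSetting.v b := hb
    show a * b = 0 ∨ 0 ≤ KRSetting.v (a * b)
    by_cases ha0 : a = 0
    · exact Or.inl (by rw [ha0, zero_mul])
    by_cases hb0 : b = 0
    · exact Or.inl (by rw [hb0, mul_zero])
    have hva : 0 ≤ KRSetting.v a := ha'.resolve_left ha0
    have hvb : 0 ≤ KRSetting.v b := hb'.resolve_left hb0
    refine Or.inr ?_
    rw [KRSetting.v_mul a b ha0 hb0]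
    omega
  neg_mem' := by
    intro a ha
    have ha' : a = 0 ∨ 0 ≤ KRSetting.v a := ha
    show -a = 0 ∨ 0 ≤ KRSetting.v (-a)
    by_cases ha0 : a = 0
    · exact Or.inl (by rw [ha0, neg_zero])
    have hva : 0 ≤ KRSetting.v a := ha'.resolve_left ha0
    have hm1 : (-1 : E) ≠ 0 := neg_ne_zero.mpr one_ne_zero
    have h1 : KRSetting.v (1 : E) = 0 := by
      have h := KRSetting.v_mul (1 : E) 1 one_ne_zero one_ne_zero
      rw [one_mul] at h; omega
    have hneg1 : KRSetting.v (-1 : E) = 0 := by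
      have h := KRSetting.v_mul (-1 : E) (-1) hm1 hm1
      rw [neg_mul_neg, one_mul, h1] at h; omega
    refine Or.inr ?_
    have : (-a : E) = -1 * a := by ring
    rw [this, KRSetting.v_mul (-1 : E) a hm1 ha0, hneg1]
    omega

/-- The ring of integers `O_{E_v}` as a type. -/
abbrev OC (E : Type) [KRSetting E] : Type := ↥(Oring E)

/-- Conjugate transpose `X ↦ ᵗX*` of a matrix over `E_v`. -/
def ctrans {a b : ℕ} (A : Matrix (Fin a) (Fin b) E) : Matrix (Fin b) (Fin a) E :=
  fun i j => cj (A j i)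

/-- A matrix is hermitian: `ᵗA* = A`. -/
def isHerm {k : ℕ} (A : Matrix (Fin k) (Fin k) E) : Prop := ∀ i j, cj (A j i) = A i j

/-- `A ∈ X_k(E_v)`: hermitian and invertible. -/
def inX {k : ℕ} (A : Matrix (Fin k) (Fin k) E) : Prop := isHerm A ∧ A.det ≠ 0

/-- All entries of `A` are integral. -/
def intMat {a b : ℕ} (A : Matrix (Fin a) (Fin b) E) : Prop := ∀ i j, inO (A i j)

/-- `A[X] = ᵗX* A X`. -/
def brk {a b : ℕ} (A : Matrix (Fin a) (Fin a) E) (X : Matrix (Fin a) (Fin b) E) :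
    Matrix (Fin b) (Fin b) E := ctrans X * A * X

/-- `⟨A, B⟩ = Tr (A B)`. -/
def trPair {k : ℕ} (A B : Matrix (Fin k) (Fin k) E) : E := (A * B).trace

/-- `GL_k(O_{E_v})` (as a set of matrices over `E_v`). -/
def GLO (E : Type) [KRSetting E] (k : ℕ) : Set (Matrix (Fin k) (Fin k) E) :=
  {g | intMat g ∧ g.det ≠ 0 ∧ inO (g.det)⁻¹}

/-- The Iwahori subgroup `Γ_k ⊆ GL_k(O_{E_v})`. -/
def Iwahori (E : Type) [KRSetting E] (k : ℕ) : Set (Matrix (Fin k) (Fin k) E) :=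
  {γ | intMat γ ∧ (∀ i j : Fin k, (j : ℕ) < (i : ℕ) → inO (γ i j / uf E)) ∧
    γ.det ≠ 0 ∧ inO (γ.det)⁻¹}

/-- Product Haar measure on `a × b` matrices over `E_v`; the integral matrices get mass `1`. -/
def matmu (E : Type) [KRSetting E] (a b : ℕ) : Measure (Matrix (Fin a) (Fin b) E) :=
  Measure.pi fun _ : Fin a => Measure.pi fun _ : Fin b => KRSetting.μ

/-- The matrix `A_t^{[r]} = diag(1_{2n-t}, π⁻¹ 1_t, 1_{2r})`. -/
def Amat (E : Type) [KRSetting E] (n t r : ℕ) :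
    Matrix (Fin (2*n + 2*r)) (Fin (2*n + 2*r)) E :=
  Matrix.diagonal fun i => if 2*n - t ≤ (i : ℕ) ∧ (i : ℕ) < 2*n then (uf E)⁻¹ else 1

/-- The support of the characteristic function `1_{h,t}^{[r]}`: the top `2n × 2n` block,
written `(A B; C D)` with `A ∈ M_{2n-t,2n-h}`, `B ∈ M_{2n-t,h}`, `C ∈ M_{t,2n-h}`,
`D ∈ M_{t,h}`, has `A, B, D` integral and `C ≡ 0 (mod π)`; the bottom `2r × 2n` block is
integral. -/
def SuppSet (E : Type) [KRSetting E] (n h t r : ℕ) :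
    Set (Matrix (Fin (2*n + 2*r)) (Fin (2*n)) E) :=
  {X | (∀ i j, inO (X i j)) ∧
    ∀ (i : Fin (2*n + 2*r)) (j : Fin (2*n)),
      2*n - t ≤ (i : ℕ) → (i : ℕ) < 2*n → (j : ℕ) < 2*n - h → inO (X i j / uf E)}

/-- The weighted representation density integral
`W_{h,t}(B, r) = ∫_{V_{2n}(E_v)} ∫ ψ_v(⟨Y, A_t^{[r]}[X] - B⟩) 1_{h,t}^{[r]}(X) dX dY`. -/
def Wfun (E : Type) [KRSetting E] (n h t : ℕ) (B : Matrix (Fin (2*n)) (Fin (2*n)) E)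
    (r : ℕ) : ℂ :=
  ∫ Y : Matrix (Fin (2*n)) (Fin (2*n)) E,
    (∫ X in SuppSet E n h t r, ch (trPair Y (brk (Amat E n t r) X - B))
      ∂(matmu E (2*n + 2*r) (2*n))) ∂(KRSetting.μV (2*n))

/-- `𝒢(Y, B) = ∫_{Γ_{2n}} ψ_v(⟨Y, -B[γ]⟩) dγ`. -/
def Gfun (E : Type) [KRSetting E] (n : ℕ) (Y B : Matrix (Fin (2*n)) (Fin (2*n)) E) : ℂ :=
  ∫ γ in Iwahori E (2*n), ch (trPair Y (-(brk B γ))) ∂(matmu E (2*n) (2*n))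

/-- `𝓕_h(Y, A_t^{[r]}) = ∫ ψ_v(⟨Y, A_t^{[r]}[X]⟩) 1_{h,t}^{[r]}(X) dX`. -/
def Ffun (E : Type) [KRSetting E] (n h t r : ℕ) (Y : Matrix (Fin (2*n)) (Fin (2*n)) E) : ℂ :=
  ∫ X in SuppSet E n h t r, ch (trPair Y (brk (Amat E n t r) X))
    ∂(matmu E (2*n + 2*r) (2*n))

/-- Entrywise congruence `A ≡ B (mod π^d)`. -/
def congMod (E : Type) [KRSetting E] (d : ℕ) {a b : ℕ}
    (A B : Matrix (Fin a) (Fin b) E) : Prop :=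
  ∀ i j, inO ((A i j - B i j) / (uf E) ^ d)

/-- `N_d(Y; Γ_{2n}) = |{γ ∈ Γ_{2n} mod π^d : γ ⬝ Y ≡ Y mod π^d}|` (counting the classes
mod `π^d` of Iwahori matrices `γ` with `γ Y ᵗγ* ≡ Y (mod π^d)`). -/
def Ncount (E : Type) [KRSetting E] (n d : ℕ) (Y : Matrix (Fin (2*n)) (Fin (2*n)) E) : ℕ :=
  Nat.card ((fun γ => Quot.mk (congMod E d) γ) ''
    {γ : Matrix (Fin (2*n)) (Fin (2*n)) E |
      γ ∈ Iwahori E (2*n) ∧ congMod E d (γ * Y * ctrans γ) Y})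

/-- `α(Y; Γ_{2n}) = lim_{d → ∞} q^{-4dn²} N_d(Y; Γ_{2n})`. -/
def alphaIw (E : Type) [KRSetting E] (n : ℕ) (Y : Matrix (Fin (2*n)) (Fin (2*n)) E) : ℝ :=
  limUnder Filter.atTop fun d : ℕ =>
    ((qq E : ℝ) ^ (-(4 * (d : ℤ) * (n : ℤ) ^ 2))) * (Ncount E n d Y : ℝ)

open Classical in
/-- `W'_{h,t}(B, 0)`: minus the derivative at `x = 1` of the polynomial in
`x = (-q)^{-2r}` whose values are `W_{h,t}(B, r)`. -/
def Wderiv (E : Type) [KRSetting E] (n h t : ℕ)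
    (B : Matrix (Fin (2*n)) (Fin (2*n)) E) : ℂ :=
  if hP : ∃ P : Polynomial ℂ, ∀ r : ℕ,
      P.eval (((-(qq E : ℂ)) ^ (2 * r))⁻¹) = Wfun E n h t B r then
    -(Polynomial.derivative hP.choose).eval 1
  else 0

open Classical in
/-- `𝓕'_h(Y, A_t^{[0]})`: minus the derivative at `x = 1` of the polynomial in
`x = (-q)^{-2r}` whose values are `𝓕_h(Y, A_t^{[r]})`. -/
def Fderiv (E : Type) [KRSetting E] (n h t : ℕ)
    (Y : Matrix (Fin (2*n)) (Fin (2*n)) E) : ℂ :=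
  if hP : ∃ P : Polynomial ℂ, ∀ r : ℕ,
      P.eval (((-(qq E : ℂ)) ^ (2 * r))⁻¹) = Ffun E n h t r Y then
    -(Polynomial.derivative hP.choose).eval 1
  else 0

/-- `|𝓐_d(A, B)|`: the number of `x ∈ M_{m,k}(O_{E_v}/π^d)` with `A[x] ≡ B (mod π^d)`. -/
def repCount (E : Type) [KRSetting E] (d : ℕ) {m k : ℕ} (A : Matrix (Fin m) (Fin m) E)
    (B : Matrix (Fin k) (Fin k) E) : ℕ :=
  Nat.card ((fun x => Quot.mk (congMod E d) x) ''
    {x : Matrix (Fin m) (Fin k) E | intMat x ∧ congMod E d (brk A x) B})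

/-- The representation density `α(A, B) = lim_{d→∞} (q^{-d})^{k(2m-k)} |𝓐_d(A,B)|`. -/
def repDen (E : Type) [KRSetting E] {m k : ℕ} (A : Matrix (Fin m) (Fin m) E)
    (B : Matrix (Fin k) (Fin k) E) : ℝ :=
  limUnder Filter.atTop fun d : ℕ =>
    ((qq E : ℝ) ^ (-((d : ℤ) * ((k : ℤ) * (2 * (m : ℤ) - (k : ℤ)))))) * (repCount E d A B : ℝ)

/-- The block diagonal matrix `diag(A, B)` of size `c = a + b`. -/
def bdiag {a b : ℕ} (A : Matrix (Fin a) (Fin a) E) (B : Matrix (Fin b) (Fin b) E)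
    (c : ℕ) (hc : c = a + b) : Matrix (Fin c) (Fin c) E :=
  fun i j =>
    if hi : (i : ℕ) < a then
      (if hj : (j : ℕ) < a then A ⟨i, hi⟩ ⟨j, hj⟩ else 0)
    else
      if hj : (j : ℕ) < a then 0
      else B ⟨(i : ℕ) - a, by have := i.isLt; omega⟩ ⟨(j : ℕ) - a, by have := j.isLt; omega⟩

/-- `diag(A, 1_{2r})`. -/
def extendOne (E : Type) [KRSetting E] {m : ℕ} (A : Matrix (Fin m) (Fin m) E) (r : ℕ) :
    Matrix (Fin (m + 2*r)) (Fin (m + 2*r)) E :=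
  bdiag A (1 : Matrix (Fin (2*r)) (Fin (2*r)) E) (m + 2*r) rfl

open Classical in
/-- The derivative `α'(A, B)` of the representation density (Kudla–Rapoport
normalization): the derivative at `X = 1` of the polynomial `F` in `X = (-q)^{-r}` with
`F((-q)^{-r}) = α(diag(A, 1_{2r}), B)` for all `r ≥ 0`. -/
def repDenD (E : Type) [KRSetting E] {m k : ℕ} (A : Matrix (Fin m) (Fin m) E)
    (B : Matrix (Fin k) (Fin k) E) : ℝ :=
  if hP : ∃ P : Polynomial ℝ, ∀ r : ℕ,
      P.eval (((-(qq E : ℝ)) ^ r)⁻¹) = repDen E (extendOne E A r) B then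
    (Polynomial.derivative hP.choose).eval 1
  else 0

/-- `Y_{σ,e} = σ ⬝ diag(π^{e_1}, …, π^{e_k})`. -/
def Ymat (E : Type) [KRSetting E] {k : ℕ} (σp : Equiv.Perm (Fin k)) (e : Fin k → ℤ) :
    Matrix (Fin k) (Fin k) E :=
  fun i j => if σp j = i then (uf E) ^ (e j) else 0

/-- The index rotation underlying the `∨_h` and `∧_h` operations. -/
def rot (n h : ℕ) (i : Fin (2*n)) : Fin (2*n) :=
  ⟨((i : ℕ) + (2*n - h)) % (2*n), Nat.mod_lt _ i.pos⟩

/-- `X^{∨_h} = (π D, C; B, π⁻¹ A)` for `X = (A B; C D)` with `A` of size `(2n-h)²`. -/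
def veeMat (E : Type) [KRSetting E] (n h : ℕ) (X : Matrix (Fin (2*n)) (Fin (2*n)) E) :
    Matrix (Fin (2*n)) (Fin (2*n)) E :=
  fun i j =>
    (if (i : ℕ) < h ∧ (j : ℕ) < h then uf E
     else if h ≤ (i : ℕ) ∧ h ≤ (j : ℕ) then (uf E)⁻¹ else 1) * X (rot n h i) (rot n h j)

/-- `X^{∧_h} = (π⁻¹ D, C; B, π A)` for `X = (A B; C D)` with `A` of size `(2n-h)²`. -/
def wedgeMat (E : Type) [KRSetting E] (n h : ℕ) (X : Matrix (Fin (2*n)) (Fin (2*n)) E) :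
    Matrix (Fin (2*n)) (Fin (2*n)) E :=
  fun i j =>
    (if (i : ℕ) < h ∧ (j : ℕ) < h then (uf E)⁻¹
     else if h ≤ (i : ℕ) ∧ h ≤ (j : ℕ) then uf E else 1) * X (rot n h i) (rot n h j)

/-- The shape (3.0.1) of the permutations `τ` occurring in `𝓡_{2n}^h`
(stated with `1`-based indices in the paper, `0`-based here). -/
def specialPerm (n h s : ℕ) (τ : Equiv.Perm (Fin (2*n))) : Prop :=
  ∀ i : Fin (2*n),
    ((τ i : ℕ) =
      if (i : ℕ) < 2*n - h - s then (i : ℕ)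
      else if (i : ℕ) < 2*n - h then (i : ℕ) + h
      else if (i : ℕ) < 2*n - s then (i : ℕ)
      else (i : ℕ) - h)

/-- `A_1^h(Y) = {j ≤ 2n - h : σ(j) = j}` (0-based). -/
def setA1 (n h : ℕ) (σp : Equiv.Perm (Fin (2*n))) : Finset (Fin (2*n)) :=
  Finset.univ.filter fun j => (j : ℕ) < 2*n - h ∧ σp j = j

/-- `A_2^h(Y) = {j ≤ 2n - h : σ(j) ≠ j, σ(j) ≤ 2n - h}` (0-based). -/
def setA2 (n h : ℕ) (σp : Equiv.Perm (Fin (2*n))) : Finset (Fin (2*n)) :=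
  Finset.univ.filter fun j => (j : ℕ) < 2*n - h ∧ σp j ≠ j ∧ (σp j : ℕ) < 2*n - h

/-- `B_1^h(Y) = {j ≤ 2n - h : σ(j) ≥ 2n - h + 1}` (0-based). -/
def setB1 (n h : ℕ) (σp : Equiv.Perm (Fin (2*n))) : Finset (Fin (2*n)) :=
  Finset.univ.filter fun j => (j : ℕ) < 2*n - h ∧ 2*n - h ≤ (σp j : ℕ)

/-- `C_1^h(Y) = {j ≥ 2n - h + 1 : σ(j) = j}` (0-based). -/
def setC1 (n h : ℕ) (σp : Equiv.Perm (Fin (2*n))) : Finset (Fin (2*n)) :=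
  Finset.univ.filter fun j => 2*n - h ≤ (j : ℕ) ∧ σp j = j

/-- `C_2^h(Y) = {j ≥ 2n - h + 1 : σ(j) ≠ j, σ(j) ≥ 2n - h + 1}` (0-based). -/
def setC2 (n h : ℕ) (σp : Equiv.Perm (Fin (2*n))) : Finset (Fin (2*n)) :=
  Finset.univ.filter fun j => 2*n - h ≤ (j : ℕ) ∧ σp j ≠ j ∧ 2*n - h ≤ (σp j : ℕ)

/-- `𝔄(Y) = |{j ∈ A_1^h(Y) ∪ A_2^h(Y) : e_j ≤ -1}|`. -/
def frakA (n h : ℕ) (σp : Equiv.Perm (Fin (2*n))) (e : Fin (2*n) → ℤ) : ℕ :=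
  ((setA1 n h σp ∪ setA2 n h σp).filter fun j => e j ≤ -1).card

/-- `ℭ(Y) = |{j ∈ C_1^h(Y) ∪ C_2^h(Y) : e_j ≤ 0}|`. -/
def frakC (n h : ℕ) (σp : Equiv.Perm (Fin (2*n))) (e : Fin (2*n) → ℤ) : ℕ :=
  ((setC1 n h σp ∪ setC2 n h σp).filter fun j => e j ≤ 0).card

/-- The auxiliary product `f_h(Y)` of Lemma 3.13. -/
def fh (E : Type) [KRSetting E] (n h : ℕ) (σp : Equiv.Perm (Fin (2*n)))
    (e : Fin (2*n) → ℤ) : ℂ :=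
  (∏ j ∈ setA1 n h σp,
      (-(qq E : ℂ)) ^ ((n : ℤ) * min 0 (e j) + (n : ℤ) * min 0 (e j + 1))) *
  (∏ j ∈ (setA2 n h σp).filter (fun j => j < σp j),
      (-(qq E : ℂ)) ^ (2 * (n : ℤ) * min 0 (e j) + 2 * (n : ℤ) * min 0 (e j + 1))) *
  (∏ j ∈ setB1 n h σp,
      (-(qq E : ℂ)) ^ (4 * (n : ℤ) * min 0 (e j))) *
  (∏ j ∈ setC1 n h σp,
      (-(qq E : ℂ)) ^ ((n : ℤ) * min 0 (e j) + (n : ℤ) * min 0 (e j - 1))) *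
  (∏ j ∈ (setC2 n h σp).filter (fun j => j < σp j),
      (-(qq E : ℂ)) ^ (2 * (n : ℤ) * min 0 (e j) + 2 * (n : ℤ) * min 0 (e j - 1)))

/-- The function `𝓙_n^n` attached to a family `β` of correction constants. -/
def Jfun (E : Type) [KRSetting E] (n : ℕ) (β : Fin n → ℂ)
    (B : Matrix (Fin (2*n)) (Fin (2*n)) E) : ℂ :=
  (Wfun E n n n (Amat E n n 0) 0)⁻¹ *
    (Wderiv E n n n B - ∑ i : Fin n, β i * Wfun E n n (i : ℕ) B 0)

/-- The hermitian pairing on `E_v^m` with Gram matrix `G`: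
`⟨x, y⟩ = ∑ x_i G_{ij} (y_j)*` (linear in the first variable). -/
def gramV (E : Type) [KRSetting E] {m : ℕ} (G : Matrix (Fin m) (Fin m) E)
    (x y : Fin m → E) : E :=
  ∑ i, ∑ j, x i * G i j * cj (y j)

/-- The dual lattice `M^∨ = {x ∈ M ⊗ E_v : ⟨x, M⟩ ⊆ O_{E_v}}` of the standard lattice
`M = O_{E_v}^m` with Gram matrix `G`. -/
def dualSet (E : Type) [KRSetting E] {m : ℕ} (G : Matrix (Fin m) (Fin m) E) :
    Set (Fin m → E) :=
  {x | ∀ y : Fin m → E, (∀ i, inO (y i)) → inO (gramV E G x y)}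

/-- `π M^∨`. -/
def piDual (E : Type) [KRSetting E] {m : ℕ} (G : Matrix (Fin m) (Fin m) E) :
    Set (Fin m → E) :=
  {x | ∃ z ∈ dualSet E G, x = uf E • z}

/-- The unitary group `U(M)` of the standard `O_{E_v}`-lattice `O_{E_v}^m` with hermitian
Gram matrix `G`, realized as integral matrices. -/
def UMO (E : Type) [KRSetting E] {m : ℕ} (G : Matrix (Fin m) (Fin m) E) :
    Set (Matrix (Fin m) (Fin m) (OC E)) :=
  {X | IsUnit X ∧ ∀ x y : Fin m → OC E,
    gramV E G (fun i => (X.mulVec x i : E)) (fun i => (X.mulVec y i : E))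
      = gramV E G (fun i => (x i : E)) (fun i => (y i : E))}

/-- Entrywise congruence mod `π^d` for matrices over `O_{E_v}`. -/
def congModO (E : Type) [KRSetting E] (d : ℕ) {a b : ℕ}
    (A B : Matrix (Fin a) (Fin b) (OC E)) : Prop :=
  ∀ i j, inO (((A i j : E) - (B i j : E)) / (uf E) ^ d)

/-- The Gram matrix `(⟨φ(u_k), φ(u_l)⟩)_{k,l}` of the columns of `Φ` with respect to the
hermitian form with Gram matrix `G`. -/
def gramO (E : Type) [KRSetting E] {m l : ℕ} (G : Matrix (Fin m) (Fin m) E)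
    (Φ : Matrix (Fin m) (Fin l) (OC E)) : Matrix (Fin l) (Fin l) E :=
  fun a b => ∑ i, ∑ j, (Φ i a : E) * G i j * cj ((Φ j b : E))

/-- `|I_d(L', M')|` where `M'` is the standard lattice with Gram matrix `GM` and `L'` the
standard lattice with Gram matrix `GL`: the number of `φ ∈ Hom(L', M'/π^d M')` with
`⟨φ x, φ y⟩ ≡ ⟨x, y⟩ (mod π^d)`. -/
def IcountL (E : Type) [KRSetting E] (d : ℕ) {m l : ℕ} (GM : Matrix (Fin m) (Fin m) E)
    (GB : Matrix (Fin l) (Fin l) E) : ℕ :=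
  Nat.card ((fun Φ => Quot.mk (congModO E d) Φ) ''
    {Φ : Matrix (Fin m) (Fin l) (OC E) | congMod E d (gramO E GM Φ) GB})

/-- The `j`-th column of `Φ`, as a vector over `E_v`. -/
def colE (E : Type) [KRSetting E] {m l : ℕ} (Φ : Matrix (Fin m) (Fin l) (OC E))
    (j : Fin l) : Fin m → E := fun i => (Φ i j : E)

/-- A submodule `N ⊆ O_{E_v}^m` is isometric to the standard unimodular lattice of rank
`n` (Gram matrix `1_n`). -/
def isomStd (E : Type) [KRSetting E] (n : ℕ) {m : ℕ} (GM : Matrix (Fin m) (Fin m) E)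
    (N : Submodule (OC E) (Fin m → OC E)) : Prop :=
  ∃ f : (Fin n → OC E) ≃ₗ[OC E] N, ∀ x y : Fin n → OC E,
    gramV E GM (fun i => ((f x).1 i : E)) (fun i => ((f y).1 i : E))
      = ∑ i, (x i : E) * cj ((y i : E))

/-- The Gram matrix `π A_n^{[r]} = diag(π 1_n, 1_n, π 1_{2r})` of the lattice `M`. -/
def gramM (E : Type) [KRSetting E] (n r : ℕ) :
    Matrix (Fin (2*n + 2*r)) (Fin (2*n + 2*r)) E :=
  Matrix.diagonal fun i => if (i : ℕ) < n then uf E else if (i : ℕ) < 2*n then 1 else uf E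

end KR

/-!
Let `R` be the rotation `i ↦ i + 2n - h (mod 2n)` of `Fin (2n)`, `P` its permutation matrix and
`W = diag(π^{a_i}) P` with `a_i = [h ≤ i]`. Then `Y^{∧_h} = π⁻¹ W Y ᵗW*` and
`B^{∨_h} = π ᵗ(W⁻¹)* B W⁻¹`, so the substitution `γ ↦ W γ W⁻¹` turns `⟨Y^{∧_h}, -B^{∨_h}[·]⟩`
into `⟨Y, -B[·]⟩`. This substitution multiplies the entry `γ_{R i, R j}` by `π^{a_i - a_j}`:
since `a_i - a_j = [j < i] - [R j < R i]`, it maps `Γ_{2n}` onto itself, and since the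
exponents `a_i - a_j` sum to zero, it preserves the Haar measure.
-/

open scoped ENNReal

lemma ENNReal.prod_zpow_eq_zpow_sum {ι : Type*} {a : ℝ≥0∞} (ha : a ≠ 0) (ha' : a ≠ ⊤)
    (s : Finset ι) (f : ι → ℤ) : ∏ i ∈ s, a ^ f i = a ^ ∑ i ∈ s, f i := by
  classical
  induction s using Finset.induction_on with
  | empty => simp
  | insert i s hi ih =>
    rw [Finset.prod_insert hi, Finset.sum_insert hi, ih, ENNReal.zpow_add ha ha']

namespace MeasureTheory

variable {α : Type*} [MeasurableSpace α]

lemma sigmaFinite_smul_of_ne_top (μ : Measure α) [SigmaFinite μ] {c : ℝ≥0∞} (hc : c ≠ ⊤) :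
    SigmaFinite (c • μ) := by
  lift c to NNReal using hc
  exact inferInstanceAs (SigmaFinite ((c : NNReal) • μ))

lemma Measure.pi_smul_eq {ι : Type*} [Fintype ι] {β : ι → Type*} [∀ i, MeasurableSpace (β i)]
    (μ : ∀ i, Measure (β i)) [∀ i, SigmaFinite (μ i)] {k : ι → ℝ≥0∞} (hk : ∀ i, k i ≠ ⊤) :
    Measure.pi (fun i => k i • μ i) = (∏ i, k i) • Measure.pi μ := by
  have := fun i => sigmaFinite_smul_of_ne_top (μ i) (hk i)
  refine Measure.pi_eq fun s _ => ?_
  simp only [Measure.smul_apply, Measure.pi_pi, smul_eq_mul, Finset.prod_mul_distrib]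

lemma Measure.pi_map_eq_smul {ι : Type*} [Fintype ι] {β : ι → Type*}
    [∀ i, MeasurableSpace (β i)] {μ : ∀ i, Measure (β i)} [∀ i, SigmaFinite (μ i)]
    {f : ∀ i, β i → β i} {k : ι → ℝ≥0∞} (hf : ∀ i, AEMeasurable (f i) (μ i))
    (hk : ∀ i, k i ≠ ⊤) (hmap : ∀ i, (μ i).map (f i) = k i • μ i) :
    (Measure.pi μ).map (fun x i => f i (x i)) = (∏ i, k i) • Measure.pi μ := by
  have : ∀ i, SigmaFinite ((μ i).map (f i)) := fun i => by
    rw [hmap i]; exact sigmaFinite_smul_of_ne_top _ (hk i)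
  rw [Measure.pi_map_pi hf, ← Measure.pi_smul_eq μ hk]
  simp only [hmap]

lemma aemeasurable_pi_map {ι : Type*} [Fintype ι] {β : ι → Type*} [∀ i, MeasurableSpace (β i)]
    {μ : ∀ i, Measure (β i)} [∀ i, SigmaFinite (μ i)] {f : ∀ i, β i → β i}
    (hf : ∀ i, AEMeasurable (f i) (μ i)) :
    AEMeasurable (fun x i => f i (x i)) (Measure.pi μ) :=
  aemeasurable_pi_lambda _ fun i =>
    (hf i).comp_quasiMeasurePreserving (Measure.quasiMeasurePreserving_eval μ i)

lemma measure_preimage_le_of_map_eq {μ : Measure α} {f : α → α} (hf : AEMeasurable f μ)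
    (hmap : μ.map f = μ) (s : Set α) : μ (f ⁻¹' s) ≤ μ s :=
  calc μ (f ⁻¹' s) ≤ μ (f ⁻¹' toMeasurable μ s) :=
        measure_mono (Set.preimage_mono (subset_toMeasurable μ s))
    _ = μ.map f (toMeasurable μ s) :=
        (Measure.map_apply_of_aemeasurable hf (measurableSet_toMeasurable μ s)).symm
    _ = μ s := by rw [hmap, measure_toMeasurable]

structure IsAEMeasurePreservingEquiv (e : α ≃ α) (μ : Measure α) : Prop where
  aemeasurable : AEMeasurable e μ
  aemeasurable_symm : AEMeasurable e.symm μ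
  map_eq : μ.map e = μ
  map_symm_eq : μ.map e.symm = μ

namespace IsAEMeasurePreservingEquiv

variable {e : α ≃ α} {μ : Measure α}

lemma symm (he : IsAEMeasurePreservingEquiv e μ) : IsAEMeasurePreservingEquiv e.symm μ :=
  ⟨he.aemeasurable_symm, he.aemeasurable, he.map_symm_eq, he.map_eq⟩

lemma measure_preimage (he : IsAEMeasurePreservingEquiv e μ) (s : Set α) :
    μ (e ⁻¹' s) = μ s := by
  refine le_antisymm (measure_preimage_le_of_map_eq he.aemeasurable he.map_eq s) ?_
  calc μ s = μ (e.symm ⁻¹' (e ⁻¹' s)) := by rw [← Set.preimage_comp, e.self_comp_symm]; rfl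
    _ ≤ μ (e ⁻¹' s) := measure_preimage_le_of_map_eq he.aemeasurable_symm he.map_symm_eq _

lemma restrict (he : IsAEMeasurePreservingEquiv e μ) {s : Set α} (hs : e ⁻¹' s = s) :
    IsAEMeasurePreservingEquiv e (μ.restrict s) := by
  have map_restrict : ∀ {f : α ≃ α}, IsAEMeasurePreservingEquiv f μ → f ⁻¹' s = s →
      (μ.restrict s).map f = μ.restrict s := by
    intro f hf hfs
    ext t ht
    rw [Measure.map_apply_of_aemeasurable hf.aemeasurable.restrict ht,
      Measure.restrict_apply₀ (hf.aemeasurable.restrict.nullMeasurableSet_preimage ht),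
      Measure.restrict_apply ht, ← hf.measure_preimage (t ∩ s), Set.preimage_inter, hfs]
  have hs' : e.symm ⁻¹' s = s := by
    conv_lhs => rw [← hs]
    rw [← Set.preimage_comp, e.self_comp_symm]; rfl
  exact ⟨he.aemeasurable.restrict, he.aemeasurable_symm.restrict, map_restrict he hs,
    map_restrict he.symm hs'⟩

lemma integral_comp {G : Type*} [NormedAddCommGroup G] [NormedSpace ℝ G]
    (he : IsAEMeasurePreservingEquiv e μ) (F : α → G) : ∫ x, F (e x) ∂μ = ∫ x, F x ∂μ := by
  by_cases hF : AEStronglyMeasurable F μ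
  · rw [← integral_map he.aemeasurable (by rwa [he.map_eq]), he.map_eq]
  · have hFe : ¬ AEStronglyMeasurable (fun x => F (e x)) μ := fun h => hF <| by
      rw [← he.map_symm_eq] at h
      simpa [Function.comp_def] using h.comp_aemeasurable he.aemeasurable_symm
    rw [integral_non_aestronglyMeasurable hF, integral_non_aestronglyMeasurable hFe]

lemma setIntegral_comp {G : Type*} [NormedAddCommGroup G] [NormedSpace ℝ G]
    (he : IsAEMeasurePreservingEquiv e μ) {s : Set α} (hs : e ⁻¹' s = s) (F : α → G) :
    ∫ x in s, F (e x) ∂μ = ∫ x in s, F x ∂μ :=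
  (he.restrict hs).integral_comp F

end IsAEMeasurePreservingEquiv

end MeasureTheory

section MonomialMatrix

variable {ι K : Type*} [Fintype ι] [DecidableEq ι]

def monomialMatrix [Semiring K] (d : ι → K) (R : Equiv.Perm ι) : Matrix ι ι K :=
  diagonal d * R.permMatrix K

lemma monomialMatrix_mul_mul_monomialMatrix_apply [CommSemiring K] (d e : ι → K)
    (R S : Equiv.Perm ι) (M : Matrix ι ι K) (i j : ι) :
    (monomialMatrix d R * M * monomialMatrix e S) i j
      = d i * M (R i) (S.symm j) * e (S.symm j) := by
  rw [monomialMatrix, monomialMatrix, Matrix.mul_assoc (diagonal d),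
    PEquiv.toMatrix_toPEquiv_mul, ← Matrix.mul_assoc, PEquiv.mul_toMatrix_toPEquiv]
  simp only [submatrix_apply, id_eq, mul_diagonal, diagonal_mul]

lemma monomialMatrix_apply [Semiring K] (d : ι → K) (R : Equiv.Perm ι) (i j : ι) :
    monomialMatrix d R i j = if R i = j then d i else 0 := by
  simp [monomialMatrix, diagonal_mul]

variable [Field K]

/-- `γ ↦ W γ W⁻¹` for `W = monomialMatrix d R`. -/
def conjMonomial (d : ι → K) (R : Equiv.Perm ι) (γ : Matrix ι ι K) : Matrix ι ι K :=
  monomialMatrix d R * γ * monomialMatrix (fun i => (d (R.symm i))⁻¹) R.symm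

lemma conjMonomial_apply (d : ι → K) (R : Equiv.Perm ι) (γ : Matrix ι ι K) (i j : ι) :
    conjMonomial d R γ i j = d i * γ (R i) (R j) * (d j)⁻¹ := by
  simp [conjMonomial, monomialMatrix_mul_mul_monomialMatrix_apply]

lemma monomialMatrix_inv_mul_monomialMatrix {d : ι → K} (hd : ∀ i, d i ≠ 0)
    (R : Equiv.Perm ι) :
    monomialMatrix (fun i => (d (R.symm i))⁻¹) R.symm * monomialMatrix d R = 1 := by
  ext i j
  have h :=
    monomialMatrix_mul_mul_monomialMatrix_apply (fun i => (d (R.symm i))⁻¹) d R.symm R 1 i j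
  rw [Matrix.mul_one] at h
  rw [h, one_apply, one_apply]
  simp only [R.symm.injective.eq_iff]
  split_ifs with hij
  · subst hij; simp [hd]
  · simp

lemma det_conjMonomial {d : ι → K} (hd : ∀ i, d i ≠ 0) (R : Equiv.Perm ι)
    (γ : Matrix ι ι K) : (conjMonomial d R γ).det = γ.det := by
  rw [conjMonomial, det_mul, det_mul, mul_comm, ← mul_assoc, ← det_mul,
    monomialMatrix_inv_mul_monomialMatrix hd, det_one, one_mul]

def conjMonomialEquiv {d : ι → K} (hd : ∀ i, d i ≠ 0) (R : Equiv.Perm ι) :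
    Matrix ι ι K ≃ Matrix ι ι K where
  toFun := conjMonomial d R
  invFun := conjMonomial (fun i => (d (R.symm i))⁻¹) R.symm
  left_inv γ := by ext i j; simp [conjMonomial_apply]; field_simp [hd]
  right_inv γ := by ext i j; simp [conjMonomial_apply]; field_simp [hd]

end MonomialMatrix

namespace KR

variable {E : Type} [KRSetting E]

lemma uf_ne_zero : uf E ≠ 0 := KRSetting.ϖ_ne

lemma cj_uf_zpow (t : ℤ) : cj (uf E ^ t) = uf E ^ t := by
  simp only [cj, uf, map_zpow₀, KRSetting.σ_ϖ]

lemma v_one : KRSetting.v (1 : E) = 0 := by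
  have h := KRSetting.v_mul (1 : E) 1 one_ne_zero one_ne_zero
  rw [one_mul] at h
  omega

lemma v_inv {x : E} (hx : x ≠ 0) : KRSetting.v x⁻¹ = -KRSetting.v x := by
  have h := KRSetting.v_mul x x⁻¹ hx (inv_ne_zero hx)
  rw [mul_inv_cancel₀ hx, v_one] at h
  omega

lemma inO_mul {a b : E} (ha : inO a) (hb : inO b) : inO (a * b) := (Oring E).mul_mem ha hb

lemma inO_uf : inO (uf E) := Or.inr (by simp [KRSetting.v_ϖ])

section ConjugateTranspose

variable {k : ℕ}

lemma ctrans_eq (A : Matrix (Fin k) (Fin k) E) : ctrans A = (A.map (KRSetting.σ (E := E)))ᵀ := rfl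

lemma ctrans_mul (A B : Matrix (Fin k) (Fin k) E) : ctrans (A * B) = ctrans B * ctrans A := by
  simp only [ctrans_eq, Matrix.map_mul, transpose_mul]

lemma ctrans_one : ctrans (1 : Matrix (Fin k) (Fin k) E) = 1 := by
  simp only [ctrans_eq, Matrix.map_one _ (map_zero _) (map_one _), transpose_one]

lemma ctrans_monomialMatrix (d : Fin k → E) (R : Equiv.Perm (Fin k)) :
    ctrans (monomialMatrix d R) = monomialMatrix (fun i => cj (d (R.symm i))) R.symm := by
  ext i j
  simp only [ctrans, monomialMatrix_apply, ← R.eq_symm_apply, eq_comm (a := j)]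
  split_ifs with h
  · subst h; rfl
  · exact map_zero _

lemma trPair_brk_conj {W W' : Matrix (Fin k) (Fin k) E} (hW : W' * W = 1) {c : E} (hc : c ≠ 0)
    (Y B γ : Matrix (Fin k) (Fin k) E) :
    trPair (c⁻¹ • (W * Y * ctrans W)) (brk (c • (ctrans W' * B * W')) (W * γ * W'))
      = trPair Y (brk B γ) := by
  have hW' : ctrans W * ctrans W' = 1 := by rw [← ctrans_mul, hW, ctrans_one]
  have hbrk : brk (c • (ctrans W' * B * W')) (W * γ * W') = c • (ctrans W' * brk B γ * W') := by
    simp only [brk, ctrans_mul, Matrix.mul_smul, Matrix.smul_mul, Matrix.mul_assoc]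
    rw [← Matrix.mul_assoc W' W, hW, Matrix.one_mul, ← Matrix.mul_assoc (ctrans W), hW',
      Matrix.one_mul]
  rw [hbrk, trPair, trPair, Matrix.smul_mul, Matrix.mul_smul, smul_smul, inv_mul_cancel₀ hc,
    one_smul]
  calc (W * Y * ctrans W * (ctrans W' * brk B γ * W')).trace
      = (W * ((Y * brk B γ) * W')).trace := by
        simp only [← Matrix.mul_assoc]
        rw [Matrix.mul_assoc (W * Y), hW', Matrix.mul_one]
    _ = (Y * brk B γ).trace := by
        rw [Matrix.trace_mul_comm, Matrix.mul_assoc, hW, Matrix.mul_one]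

lemma trPair_neg (A X : Matrix (Fin k) (Fin k) E) : trPair A (-X) = -trPair A X := by
  simp only [trPair, Matrix.mul_neg, trace_neg]

end ConjugateTranspose

section Iwahori

variable {m : ℕ}

/-- The valuation `[j < i]` that an entry `γ i j` of an Iwahori matrix is required to have. -/
def lowerExp (i j : Fin m) : ℤ := if (j : ℕ) < i then 1 else 0

lemma mem_Iwahori_iff (γ : Matrix (Fin m) (Fin m) E) :
    γ ∈ Iwahori E m ↔
      (∀ i j, inO (γ i j * uf E ^ (-lowerExp i j))) ∧ γ.det ≠ 0 ∧ inO γ.det⁻¹ := by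
  constructor
  · rintro ⟨hint, hlow, hdet⟩
    refine ⟨fun i j => ?_, hdet⟩
    unfold lowerExp
    split_ifs with hij
    · simpa [div_eq_mul_inv] using hlow i j hij
    · simpa using hint i j
  · rintro ⟨hent, hdet⟩
    refine ⟨fun i j => ?_, fun i j hij => by simpa [lowerExp, hij, div_eq_mul_inv] using hent i j,
      hdet⟩
    have h := inO_mul (hent i j) (inO_uf (E := E))
    unfold lowerExp at h
    split_ifs at h with hij
    · simpa [uf_ne_zero] using h
    · simpa [lowerExp, hij] using hent i j

/-- `ha` says that conjugation shifts the valuation of each entry by exactly the change of its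
required valuation. -/
lemma conjMonomial_mem_Iwahori_iff {a : Fin m → ℤ} {R : Equiv.Perm (Fin m)}
    (ha : ∀ i j, a i - a j = lowerExp i j - lowerExp (R i) (R j))
    (γ : Matrix (Fin m) (Fin m) E) :
    conjMonomial (fun i => uf E ^ a i) R γ ∈ Iwahori E m ↔ γ ∈ Iwahori E m := by
  have hentry : ∀ i j, conjMonomial (fun i => uf E ^ a i) R γ i j * uf E ^ (-lowerExp i j)
      = γ (R i) (R j) * uf E ^ (-lowerExp (R i) (R j)) := by
    intro i j
    have hπ := uf_ne_zero (E := E)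
    rw [conjMonomial_apply, show -lowerExp (R i) (R j) = a i + -a j + -lowerExp i j by
      linarith [ha i j], zpow_add₀ hπ, zpow_add₀ hπ, _root_.zpow_neg, _root_.zpow_neg]
    ring
  rw [mem_Iwahori_iff, mem_Iwahori_iff, det_conjMonomial (fun i => zpow_ne_zero _ uf_ne_zero)]
  simp only [hentry]
  exact and_congr_left fun _ =>
    ⟨fun h i j => by simpa using h (R.symm i) (R.symm j), fun h i j => h _ _⟩

end Iwahori

section HaarMeasure

lemma qq_ne_zero : (qq E : ℝ≥0∞) ≠ 0 := by
  obtain ⟨k, -, hq⟩ := KRSetting.q_pow (E := E)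
  rw [qq, hq]
  exact_mod_cast pow_ne_zero k (KRSetting.pPrime (E := E)).ne_zero

lemma qq_zpow_ne_top (z : ℤ) : (qq E : ℝ≥0∞) ^ z ≠ ⊤ :=
  (ENNReal.zpow_lt_top qq_ne_zero (ENNReal.natCast_ne_top _) z).ne

lemma aemeasurable_const_mul {a : E} (ha : a ≠ 0) :
    AEMeasurable (fun x => a * x) (KRSetting.μ (E := E)) :=
  -- the image of a measure under a map that is not a.e.-measurable is `0`, contradicting `μ_scale`
  AEMeasurable.of_map_ne_zero fun h => by
    have hO := congrArg (fun ν : Measure E => ν {x : E | x = 0 ∨ 0 ≤ KRSetting.v x}) h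
    simp only [KRSetting.μ_scale a ha, Measure.smul_apply, KRSetting.μ_O, smul_eq_mul, mul_one,
      Measure.coe_zero, Pi.zero_apply] at hO
    exact (ENNReal.zpow_pos qq_ne_zero (ENNReal.natCast_ne_top _) _).ne' hO

variable {a b : ℕ}

lemma aemeasurable_mul_entrywise {c : Fin a → Fin b → E} (hc : ∀ i j, c i j ≠ 0) :
    AEMeasurable (fun γ : Matrix (Fin a) (Fin b) E => of fun i j => c i j * γ i j)
      (matmu E a b) :=
  aemeasurable_pi_map fun i => aemeasurable_pi_map fun j => aemeasurable_const_mul (hc i j)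

lemma matmu_map_mul_entrywise {c : Fin a → Fin b → E} (hc : ∀ i j, c i j ≠ 0) :
    (matmu E a b).map (fun γ => of fun i j => c i j * γ i j)
      = (qq E : ℝ≥0∞) ^ (∑ i, ∑ j, 2 * KRSetting.v (c i j)) • matmu E a b := by
  have hrow : ∀ i, (Measure.pi fun _ : Fin b => KRSetting.μ (E := E)).map
      (fun x j => c i j * x j)
        = (∏ j, (qq E : ℝ≥0∞) ^ (2 * KRSetting.v (c i j))) • Measure.pi fun _ => KRSetting.μ :=
    fun i => Measure.pi_map_eq_smul (fun j => aemeasurable_const_mul (hc i j))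
      (fun j => qq_zpow_ne_top _) (fun j => KRSetting.μ_scale _ (hc i j))
  have hprod : ∀ i, ∏ j, (qq E : ℝ≥0∞) ^ (2 * KRSetting.v (c i j))
      = (qq E : ℝ≥0∞) ^ ∑ j, 2 * KRSetting.v (c i j) := fun i =>
    ENNReal.prod_zpow_eq_zpow_sum qq_ne_zero (ENNReal.natCast_ne_top _) _ _
  refine (Measure.pi_map_eq_smul
    (fun i => aemeasurable_pi_map fun j => aemeasurable_const_mul (hc i j))
    (fun i => hprod i ▸ qq_zpow_ne_top _) hrow).trans ?_
  rw [Finset.prod_congr rfl fun i _ => hprod i,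
    ENNReal.prod_zpow_eq_zpow_sum qq_ne_zero (ENNReal.natCast_ne_top _)]
  rfl

lemma measurePreserving_matmu_reindex (R : Equiv.Perm (Fin a)) (S : Equiv.Perm (Fin b)) :
    MeasurePreserving (fun γ : Matrix (Fin a) (Fin b) E => γ.submatrix R S)
      (matmu E a b) (matmu E a b) :=
  measurePreserving_arrowCongr' _ _ R.symm
    (MeasurableEquiv.arrowCongr' S.symm (MeasurableEquiv.refl E)) fun _ =>
      measurePreserving_arrowCongr' _ _ S.symm (MeasurableEquiv.refl E) fun _ =>
        MeasurePreserving.id _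

variable {m : ℕ}

lemma aemeasurable_conjMonomial_and_map_eq {d : Fin m → E} (hd : ∀ i, d i ≠ 0)
    (R : Equiv.Perm (Fin m)) :
    AEMeasurable (conjMonomial d R) (matmu E m m) ∧
      (matmu E m m).map (conjMonomial d R) = matmu E m m := by
  set c : Fin m → Fin m → E := fun i j => d i * (d j)⁻¹
  have hc : ∀ i j, c i j ≠ 0 := fun i j => mul_ne_zero (hd i) (inv_ne_zero (hd j))
  have hsplit : conjMonomial d R = (fun γ => of fun i j => c i j * γ i j) ∘
      (fun γ : Matrix (Fin m) (Fin m) E => γ.submatrix R R) := by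
    funext γ
    ext i j
    simp only [conjMonomial_apply, Function.comp_apply, of_apply, submatrix_apply, c]
    ring
  have hsum : ∑ i, ∑ j, 2 * KRSetting.v (c i j) = 0 := by
    have hv : ∀ i j, 2 * KRSetting.v (c i j) = 2 * KRSetting.v (d i) - 2 * KRSetting.v (d j) := by
      intro i j
      rw [KRSetting.v_mul _ _ (hd i) (inv_ne_zero (hd j)), v_inv (hd j)]
      ring
    simp only [hv, Finset.sum_sub_distrib]
    rw [Finset.sum_comm (f := fun _ j => 2 * KRSetting.v (d j)), sub_self]
  have hP := measurePreserving_matmu_reindex (E := E) R R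
  have hS : AEMeasurable (fun γ : Matrix (Fin m) (Fin m) E => of fun i j => c i j * γ i j)
      ((matmu E m m).map fun γ => γ.submatrix R R) := by
    rw [hP.map_eq]; exact aemeasurable_mul_entrywise hc
  rw [hsplit]
  refine ⟨hS.comp_measurable hP.measurable, ?_⟩
  rw [← AEMeasurable.map_map_of_aemeasurable hS hP.measurable.aemeasurable, hP.map_eq,
    matmu_map_mul_entrywise hc, hsum, zpow_zero, one_smul]

lemma isAEMeasurePreservingEquiv_conjMonomialEquiv {d : Fin m → E} (hd : ∀ i, d i ≠ 0)
    (R : Equiv.Perm (Fin m)) :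
    IsAEMeasurePreservingEquiv (conjMonomialEquiv hd R) (matmu E m m) := by
  have hd' : ∀ i, (d (R.symm i))⁻¹ ≠ 0 := fun i => inv_ne_zero (hd _)
  obtain ⟨h1, h2⟩ := aemeasurable_conjMonomial_and_map_eq hd R
  obtain ⟨h1', h2'⟩ := aemeasurable_conjMonomial_and_map_eq hd' R.symm
  exact ⟨h1, h1', h2, h2'⟩

end HaarMeasure

section Rotation

variable {n h : ℕ}

lemma rot_rot (h h' : ℕ) (hs : (2*n - h) + (2*n - h') = 2*n) (i : Fin (2*n)) :
    rot n h' (rot n h i) = i := by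
  apply Fin.ext
  simp only [rot, Nat.mod_add_mod]
  rw [Nat.add_assoc, hs, Nat.add_mod_right, Nat.mod_eq_of_lt i.isLt]

def rotEquiv (n h : ℕ) : Equiv.Perm (Fin (2*n)) where
  toFun := rot n h
  invFun := rot n (2*n - h)
  left_inv := rot_rot h (2*n - h) (by omega)
  right_inv := rot_rot (2*n - h) h (by omega)

lemma rotEquiv_val (hh : h ≤ 2*n) (i : Fin (2*n)) :
    (rotEquiv n h i : ℕ) = if (i : ℕ) < h then i + (2*n - h) else i - h := by
  have hi := i.isLt
  show ((i : ℕ) + (2*n - h)) % (2*n) = _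
  split_ifs with hih
  · exact Nat.mod_eq_of_lt (by omega)
  · rw [show (i : ℕ) + (2*n - h) = i - h + 2*n by omega, Nat.add_mod_right,
      Nat.mod_eq_of_lt (by omega)]

def blockExp (h : ℕ) (i : Fin (2*n)) : ℤ := if h ≤ (i : ℕ) then 1 else 0

lemma blockExp_sub_blockExp (hh : h ≤ 2*n) (i j : Fin (2*n)) :
    blockExp h i - blockExp h j
      = lowerExp i j - lowerExp (rotEquiv n h i) (rotEquiv n h j) := by
  simp only [blockExp, lowerExp, rotEquiv_val hh]
  split_ifs <;> omega

abbrev blockMonomial (E : Type) [KRSetting E] (n h : ℕ) : Matrix (Fin (2*n)) (Fin (2*n)) E :=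
  monomialMatrix (fun i => uf E ^ blockExp h i) (rotEquiv n h)

abbrev blockMonomialInv (E : Type) [KRSetting E] (n h : ℕ) : Matrix (Fin (2*n)) (Fin (2*n)) E :=
  monomialMatrix (fun i => (uf E ^ blockExp h ((rotEquiv n h).symm i))⁻¹) (rotEquiv n h).symm

lemma wedgeMat_eq (Y : Matrix (Fin (2*n)) (Fin (2*n)) E) :
    wedgeMat E n h Y
      = (uf E)⁻¹ • (blockMonomial E n h * Y * ctrans (blockMonomial E n h)) := by
  ext i j
  rw [ctrans_monomialMatrix, Matrix.smul_apply, monomialMatrix_mul_mul_monomialMatrix_apply]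
  simp only [wedgeMat, blockExp, Equiv.symm_symm, Equiv.symm_apply_apply, cj_uf_zpow,
    smul_eq_mul]
  have hπ := uf_ne_zero (E := E)
  rw [show rot n h = rotEquiv n h from rfl]
  by_cases hi : h ≤ (i : ℕ) <;> by_cases hj : h ≤ (j : ℕ) <;>
    simp [hi, hj, hπ, mul_comm]

lemma veeMat_eq (B : Matrix (Fin (2*n)) (Fin (2*n)) E) :
    veeMat E n h B
      = uf E • (ctrans (blockMonomialInv E n h) * B * blockMonomialInv E n h) := by
  ext i j
  rw [ctrans_monomialMatrix, Matrix.smul_apply, monomialMatrix_mul_mul_monomialMatrix_apply]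
  simp only [veeMat, blockExp, Equiv.symm_symm, Equiv.symm_apply_apply, cj, map_inv₀, cj_uf_zpow,
    smul_eq_mul]
  have hπ := uf_ne_zero (E := E)
  rw [show rot n h = rotEquiv n h from rfl]
  by_cases hi : h ≤ (i : ℕ) <;> by_cases hj : h ≤ (j : ℕ) <;>
    simp [hi, hj, hπ, mul_comm]

end Rotation

lemma Gfun_wedgeMat_veeMat {n h : ℕ} (hh : h ≤ 2*n) (Y B : Matrix (Fin (2*n)) (Fin (2*n)) E) :
    Gfun E n (wedgeMat E n h Y) (veeMat E n h B) = Gfun E n Y B := by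
  have hd : ∀ i : Fin (2*n), uf E ^ blockExp h i ≠ 0 := fun i => zpow_ne_zero _ uf_ne_zero
  set Φ := conjMonomialEquiv hd (rotEquiv n h)
  have hΓ : Φ ⁻¹' Iwahori E (2*n) = Iwahori E (2*n) :=
    Set.ext (conjMonomial_mem_Iwahori_iff (blockExp_sub_blockExp hh))
  have hpair : ∀ γ, trPair (wedgeMat E n h Y) (-(brk (veeMat E n h B) (Φ γ)))
      = trPair Y (-(brk B γ)) := fun γ => by
    rw [trPair_neg, trPair_neg, wedgeMat_eq, veeMat_eq]
    exact congrArg Neg.neg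
      (trPair_brk_conj (monomialMatrix_inv_mul_monomialMatrix hd _) uf_ne_zero Y B γ)
  calc Gfun E n (wedgeMat E n h Y) (veeMat E n h B)
      = ∫ γ in Iwahori E (2*n), ch (trPair (wedgeMat E n h Y) (-(brk (veeMat E n h B) (Φ γ))))
          ∂(matmu E (2*n) (2*n)) :=
        ((isAEMeasurePreservingEquiv_conjMonomialEquiv hd _).setIntegral_comp hΓ _).symm
    _ = Gfun E n Y B := by simp only [hpair, Gfun]

end KR

open KR in
theorem statement2_general
    (E : Type) [KRSetting E] (n : ℕ) (h : ℕ) (hh : h ≤ 2*n)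
    (σp : Equiv.Perm (Fin (2*n))) (e : Fin (2*n) → ℤ)
    (τ : Equiv.Perm (Fin (2*n))) (lam : Fin (2*n) → ℤ) :
    Gfun E n (Ymat E σp e) (Ymat E τ lam)
      = Gfun E n (wedgeMat E n h (Ymat E σp e)) (veeMat E n h (Ymat E τ lam)) :=
  (Gfun_wedgeMat_veeMat hh _ _).symm

open KR in
/-- Lemma 3.8: `𝒢(Y,B) = 𝒢(Y^{∧_h}, B^{∨_h})` for `Y ∈ 𝓡_{2n}` and
`B ∈ 𝓡_{2n}^h`. -/
theorem statement2
    (E : Type) [KRSetting E] (n : ℕ) (hn : 0 < n) (h : ℕ) (hh : h ≤ 2*n)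
    (σp : Equiv.Perm (Fin (2*n))) (e : Fin (2*n) → ℤ)
    (hσ : σp * σp = 1) (he : ∀ i, e (σp i) = e i)
    (τ : Equiv.Perm (Fin (2*n))) (lam : Fin (2*n) → ℤ) (s : ℕ)
    (hs1 : 1 ≤ s) (hs2 : s ≤ min h (2*n - h))
    (hτ : specialPerm n h s τ) (hτ2 : τ * τ = 1) (hlam : ∀ i, lam (τ i) = lam i) :
    Gfun E n (Ymat E σp e) (Ymat E τ lam)
      = Gfun E n (wedgeMat E n h (Ymat E σp e)) (veeMat E n h (Ymat E τ lam)) :=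
  statement2_general E n h hh σp e τ lam
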